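/- arXiv:2312.12103 — 2 statements merged into one kernel-verified Lean document; each statement's English description precedes it below -/
import Mathlib

section
/- Let m be a positive integer or half-integer (2m ∈ ℕ) and s ∈ ℤ + 1/2. Let τ lie in the upper half-plane and z₁, z₂, z ∈ ℂ. Set f_{j,k} := (−1)^j q^{(m+1/2)(j+s/(2m+1))² − k²/(4m)} e^{−2πijm(z₁−z₂)+πik(z₁−z₂)}. Then for either choice of sign: (∑_{j,k∈ℤ, 0≤k<2mj} − ∑_{j,k∈ℤ, 2mj≤k<0}) f_{j,k} θ^{(±)}_{k,m}(τ, z) = − ∑_{r=0}^{2m−1} (∑_{j,p∈ℤ, 0<p≤j} − ∑_{j,p∈ℤ, j<p≤0}) (±1)^p f_{−j, r−2pm} θ^{(±)}_{r,m}(τ, z). -/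
noncomputable section

open Complex

/-- `e2 w = exp (2 π i w)`; with `q = e^{2πiτ}`, the power `q^x` corresponds to `e2 (x * τ)`. -/
def e2 (w : ℂ) : ℂ := Complex.exp (2 * (Real.pi : ℂ) * Complex.I * w)

/-- Jacobi-type theta function `θ^{(ε)}_{n,m}(τ, z) = ∑_{j∈ℤ} ε^j q^{m(j+n/(2m))²} e^{2πim(j+n/(2m))z}`. -/
def jtheta (ε n m τ z : ℂ) : ℂ :=
  ∑' j : ℤ, ε ^ j *
    e2 (m * ((j : ℂ) + n / (2 * m)) ^ 2 * τ + m * ((j : ℂ) + n / (2 * m)) * z)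

/-- Mock theta function `Φ₁^{(ε)[m,s]}(τ, z₁, z₂)`. -/
def Phi1 (ε m s τ z₁ z₂ : ℂ) : ℂ :=
  ∑' j : ℤ, ε ^ j *
    e2 (m * (j : ℂ) * (z₁ + z₂) + s * z₁ + (m * (j : ℂ) ^ 2 + s * (j : ℂ)) * τ) /
      (1 - e2 (z₁ + (j : ℂ) * τ))

/-- Dedekind eta function `η(τ) = q^{1/24} ∏_{k≥1} (1 - q^k)`. -/
def dedekindEta (τ : ℂ) : ℂ := e2 (τ / 24) * ∏' k : ℕ, (1 - e2 (((k : ℂ) + 1) * τ))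

/-- Jacobi theta `ϑ₁₁(τ, z) = i ∑_{j∈ℤ} (−1)^j q^{(j+1/2)²/2} e^{2πi(j+1/2)z}`. -/
def theta11 (τ z : ℂ) : ℂ :=
  Complex.I * ∑' j : ℤ, (-1 : ℂ) ^ j *
    e2 (((j : ℂ) + 1 / 2) ^ 2 / 2 * τ + ((j : ℂ) + 1 / 2) * z)

/-- Indefinite double sum `(∑_{j,p∈ℤ, 0<p≤j} − ∑_{j,p∈ℤ, j<p≤0}) f j p`. -/
def indefSum (f : ℤ → ℤ → ℂ) : ℂ :=
  ∑' jp : ℤ × ℤ,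
    ((if 0 < jp.2 ∧ jp.2 ≤ jp.1 then f jp.1 jp.2 else 0) -
      (if jp.1 < jp.2 ∧ jp.2 ≤ 0 then f jp.1 jp.2 else 0))

/-- `g^{[m]}_{n,ν}(τ)`. -/
def gfun (m : ℂ) (n ν : ℤ) (τ : ℂ) : ℂ :=
  indefSum fun j p =>
    (-1 : ℂ) ^ j *
      e2 (((m + 1 / 2) * ((j : ℂ) + (ν : ℂ) - ((ν : ℂ) + 1 / 2) / (2 * m + 1)) ^ 2 -
        m * ((p : ℂ) + (ν : ℂ) - (n : ℂ) / (2 * m)) ^ 2) * τ)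

/-- `h^{[m]}_{n,ν}(τ, z)`. -/
def hfun (m : ℂ) (n ν : ℤ) (τ z : ℂ) : ℂ :=
  ∑' j : ℤ,
    e2 (m * (j : ℂ) * z + (n : ℂ) * z / 2 +
        (m * (j : ℂ) ^ 2 + (n : ℂ) * ((j : ℂ) + (ν : ℂ))) * τ) /
      (1 - e2 (m * z + 2 * m * ((j : ℂ) + (ν : ℂ)) * τ))

/-- `G^{[m]}_{n,ν}(τ, z)`. -/
def Gfun (m : ℂ) (n ν : ℤ) (τ z : ℂ) : ℂ :=
  gfun m n ν τ * jtheta 1 (n : ℂ) m τ z +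
    (-1 : ℂ) ^ ν * e2 (-(m * (ν : ℂ) ^ 2) * τ) *
      jtheta (-1) ((ν : ℂ) + 1 / 2) (m + 1 / 2) τ 0 * hfun m n ν τ z

/-- `F^{[m](a,b)}_{n,ν}(τ, z)`. -/
def Ffun (m : ℂ) (a b n ν : ℤ) (τ z : ℂ) : ℂ :=
  e2 ((a : ℂ) * z / 2 + (a : ℂ) ^ 2 / (4 * m) * τ) *
    Gfun m n ν τ (z + (a : ℂ) * τ / m + (b : ℂ) / m)

/-- The coefficient `f_{j,k}` of Lemma 3.1:
`f_{j,k} = (−1)^j q^{(m+1/2)(j+s/(2m+1))² − k²/(4m)} e^{−2πijm(z₁−z₂)+πik(z₁−z₂)}`. -/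
def fcoef (m s τ z₁ z₂ : ℂ) (j k : ℤ) : ℂ :=
  (-1 : ℂ) ^ j *
    e2 (((m + 1 / 2) * ((j : ℂ) + s / (2 * m + 1)) ^ 2 - (k : ℂ) ^ 2 / (4 * m)) * τ +
      (-((j : ℂ) * m) + (k : ℂ) / 2) * (z₁ - z₂))

/-! The identity is a change of summation variables. Writing `k = r - p * M` with `0 ≤ r < M`
and replacing `j` by `-j`, the quasi-periodicity `θ_{r - pM} = ε^p θ_r` of the theta functions turns
the cone `0 ≤ k < Mj` into `j < p ≤ 0` and the cone `Mj ≤ k < 0` into `0 < p ≤ j`.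

The rearrangement needs absolute convergence. On `|k| ≤ M |j|` the quadratic part of the exponent
of `|f_{j,k}|` is `(M+1)/2 j² - k²/(2M) ≥ j²/4 + k²/(4M²)`, so `|f_{j,k}|` is dominated by a product
of two one-variable Gaussians, while `|θ_k|` takes only finitely many values. -/

open Real

lemma summable_exp_neg_mul_sq_add_mul {a : ℝ} (ha : 0 < a) (b : ℝ) :
    Summable fun n : ℤ => Real.exp (-a * n ^ 2 + b * n) := by
  have h := (summable_jacobiTheta₂_term_iff (↑(-b / (2 * π)) * I) (↑(a / π) * I)).mpr
    (by simpa using div_pos ha pi_pos)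
  rw [← summable_norm_iff] at h
  refine h.congr fun n => ?_
  rw [norm_jacobiTheta₂_term]
  simp only [mul_im, ofReal_re, I_im, ofReal_im, I_re, mul_zero, mul_one, add_zero]
  congr 1
  field_simp
  ring

lemma norm_e2 (w : ℂ) : ‖e2 w‖ = rexp (-(2 * π) * w.im) := by
  rw [e2, Complex.norm_exp]
  congr 1
  simp [Complex.mul_re, Complex.mul_im]

lemma norm_fcoef (M : ℕ) (s τ z₁ z₂ : ℂ) (j k : ℤ) :
    ‖fcoef ((M : ℂ) / 2) s τ z₁ z₂ j k‖ =
      rexp (-(2 * π) * (((M + 1) / 2 * j ^ 2 - k ^ 2 / (2 * M)) * τ.im +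
        j * (s * τ - M / 2 * (z₁ - z₂)).im + k * ((z₁ - z₂) / 2).im +
        (s ^ 2 * τ / (2 * (M + 1))).im)) := by
  have hM : (M : ℂ) + 1 ≠ 0 := by exact_mod_cast Nat.succ_ne_zero M
  have hw : ((M / 2 + 1 / 2) * ((j : ℂ) + s / (2 * (M / 2) + 1)) ^ 2 -
        (k : ℂ) ^ 2 / (4 * (M / 2))) * τ + (-((j : ℂ) * (M / 2)) + (k : ℂ) / 2) * (z₁ - z₂) =
      (((M + 1) / 2 * j ^ 2 - k ^ 2 / (2 * M) : ℝ) : ℂ) * τ +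
        ((j : ℝ) : ℂ) * (s * τ - M / 2 * (z₁ - z₂)) + ((k : ℝ) : ℂ) * ((z₁ - z₂) / 2) +
        s ^ 2 * τ / (2 * (M + 1)) := by
    push_cast
    field_simp
    ring
  rw [fcoef, hw, norm_mul, norm_zpow, norm_neg, norm_one, one_zpow, one_mul, norm_e2]
  simp only [Complex.add_im, Complex.im_ofReal_mul]

lemma quadratic_lower_bound_of_abs_le {M j k : ℝ} (hM : 0 < M) (hk : |k| ≤ M * |j|) :
    j ^ 2 / 4 + k ^ 2 / (4 * M ^ 2) ≤ (M + 1) / 2 * j ^ 2 - k ^ 2 / (2 * M) := by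
  have hk2 : k ^ 2 ≤ M ^ 2 * j ^ 2 := by
    rw [← mul_pow, ← sq_abs (M * j), abs_mul, abs_of_pos hM]
    exact sq_le_sq.mpr (hk.trans (le_abs_self _))
  have h1 : k ^ 2 / (4 * M ^ 2) ≤ j ^ 2 / 4 := by
    rw [div_le_div_iff₀ (by positivity) (by norm_num)]; nlinarith
  have h2 : k ^ 2 / (2 * M) ≤ M * j ^ 2 / 2 := by
    rw [div_le_div_iff₀ (by positivity) (by norm_num)]; nlinarith
  nlinarith [sq_nonneg j]

lemma exists_summable_bound_norm_fcoef (M : ℕ) [NeZero M] (s : ℂ) {τ : ℂ} (hτ : 0 < τ.im)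
    (z₁ z₂ : ℂ) :
    ∃ B : ℤ × ℤ → ℝ, Summable B ∧ (∀ jk, 0 ≤ B jk) ∧
      ∀ j k : ℤ, |k| ≤ M * |j| → ‖fcoef ((M : ℂ) / 2) s τ z₁ z₂ j k‖ ≤ B (j, k) := by
  set a := (s * τ - M / 2 * (z₁ - z₂)).im
  set b := ((z₁ - z₂) / 2).im
  set c := (s ^ 2 * τ / (2 * (M + 1))).im
  have hMR : (0 : ℝ) < M := by exact_mod_cast Nat.pos_of_neZero M
  refine ⟨fun jk => rexp (-(2 * π) * c) *
      (rexp (-(π * τ.im / 2) * jk.1 ^ 2 + -(2 * π) * a * jk.1) *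
        rexp (-(π * τ.im / (2 * M ^ 2)) * jk.2 ^ 2 + -(2 * π) * b * jk.2)),
    ?_, fun _ => by positivity, fun j k hjk => ?_⟩
  · have hj := summable_exp_neg_mul_sq_add_mul (a := π * τ.im / 2) (by positivity) (-(2 * π) * a)
    have hk := summable_exp_neg_mul_sq_add_mul (a := π * τ.im / (2 * M ^ 2)) (by positivity)
      (-(2 * π) * b)
    exact (hj.mul_of_nonneg hk (fun _ => (exp_pos _).le) (fun _ => (exp_pos _).le)).mul_left _
  · have hq := quadratic_lower_bound_of_abs_le hMR (j := j) (k := k) (by exact_mod_cast hjk)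
    dsimp only [a, b, c]
    rw [norm_fcoef, ← Real.exp_add, ← Real.exp_add, Real.exp_le_exp]
    have := mul_le_mul_of_nonneg_left hq (by positivity : (0 : ℝ) ≤ 2 * π * τ.im)
    linear_combination this

lemma jtheta_sub_mul {ε m : ℂ} (hε : ε ≠ 0) (hm : m ≠ 0) (n : ℂ) (p : ℤ) (τ z : ℂ) :
    jtheta ε (n - 2 * m * p) m τ z = ε ^ p * jtheta ε n m τ z := by
  have hshift (j : ℤ) :
      (j : ℂ) + (n - 2 * m * p) / (2 * m) = ((j - p : ℤ) : ℂ) + n / (2 * m) := by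
    push_cast
    field_simp
    ring
  rw [jtheta, jtheta, ← tsum_mul_left]
  conv_rhs => rw [← (Equiv.subRight p).tsum_eq]
  refine tsum_congr fun j => ?_
  rw [Equiv.subRight_apply, hshift, ← mul_assoc, ← zpow_add₀ hε, add_sub_cancel]

lemma jtheta_intCast_sub_mul (M : ℕ) [NeZero M] {ε : ℂ} (hε : ε ≠ 0) (r p : ℤ) (τ z : ℂ) :
    jtheta ε ((r - p * M : ℤ) : ℂ) ((M : ℂ) / 2) τ z = ε ^ p * jtheta ε r ((M : ℂ) / 2) τ z := by
  rw [← jtheta_sub_mul hε (by simp [NeZero.ne M])]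
  congr 1
  push_cast
  ring

lemma jtheta_intCast_eq_emod (M : ℕ) [NeZero M] {ε : ℂ} (hε : ε ≠ 0) (k : ℤ) (τ z : ℂ) :
    jtheta ε k ((M : ℂ) / 2) τ z =
      ε ^ (-(k / M)) * jtheta ε ((k % M : ℤ) : ℂ) ((M : ℂ) / 2) τ z := by
  rw [← jtheta_intCast_sub_mul M hε, neg_mul, sub_neg_eq_add, mul_comm, Int.emod_add_mul_ediv]

lemma exists_norm_jtheta_le (M : ℕ) [NeZero M] {ε : ℂ} (hε : ‖ε‖ = 1) (τ z : ℂ) :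
    ∃ C, ∀ k : ℤ, ‖jtheta ε k ((M : ℂ) / 2) τ z‖ ≤ C := by
  refine ⟨∑ r ∈ Finset.Ico (0 : ℤ) M, ‖jtheta ε r ((M : ℂ) / 2) τ z‖, fun k => ?_⟩
  have hM : (0 : ℤ) < M := by simp [Nat.pos_of_neZero M]
  rw [jtheta_intCast_eq_emod M (norm_ne_zero_iff.mp (by simp [hε])), norm_mul, norm_zpow, hε,
    one_zpow, one_mul]
  refine Finset.single_le_sum (f := fun r : ℤ => ‖jtheta ε r ((M : ℂ) / 2) τ z‖)
    (fun _ _ => norm_nonneg _) ?_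
  exact Finset.mem_Ico.mpr ⟨Int.emod_nonneg k hM.ne', Int.emod_lt_of_pos k hM⟩

lemma abs_le_mul_abs_of_cone (M : ℕ) {j k : ℤ} (h : (0 ≤ k ∧ k < M * j) ∨ (M * j ≤ k ∧ k < 0)) :
    |k| ≤ M * |j| := by
  have hM : (0 : ℤ) ≤ M := M.cast_nonneg
  rcases h with ⟨h₁, h₂⟩ | ⟨h₁, h₂⟩
  · rw [abs_of_nonneg h₁]; nlinarith [le_abs_self j]
  · rw [abs_of_neg h₂]; nlinarith [neg_abs_le j]

lemma summable_ite_fcoef_mul_jtheta {M : ℕ} [NeZero M] (s : ℂ) {τ : ℂ} (hτ : 0 < τ.im)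
    (z₁ z₂ z : ℂ) {ε : ℂ} (hε : ‖ε‖ = 1) {P : ℤ × ℤ → Prop} [DecidablePred P]
    (hP : ∀ jk, P jk → |jk.2| ≤ M * |jk.1|) :
    Summable fun jk : ℤ × ℤ => if P jk then
      fcoef ((M : ℂ) / 2) s τ z₁ z₂ jk.1 jk.2 * jtheta ε jk.2 ((M : ℂ) / 2) τ z else 0 := by
  obtain ⟨B, hB, hB₀, hfB⟩ := exists_summable_bound_norm_fcoef M s hτ z₁ z₂
  obtain ⟨C, hC⟩ := exists_norm_jtheta_le M hε τ z
  refine (hB.mul_left C).of_norm_bounded fun jk => ?_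
  split_ifs with h
  · rw [norm_mul, mul_comm C]
    exact mul_le_mul (hfB _ _ (hP jk h)) (hC _) (norm_nonneg _) (hB₀ _)
  · simpa using mul_nonneg ((norm_nonneg _).trans (hC 0)) (hB₀ jk)

lemma sub_mul_mem_Ico_zero_iff {M r p j : ℤ} (hr₀ : 0 ≤ r) (hr : r < M) :
    r - p * M ∈ Set.Ico 0 (M * -j) ↔ p ∈ Set.Ioc j 0 := by
  constructor <;> rintro ⟨h₁, h₂⟩ <;> constructor <;> by_contra! h <;> nlinarith

lemma sub_mul_mem_Ico_neg_iff {M r p j : ℤ} (hr₀ : 0 ≤ r) (hr : r < M) :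
    r - p * M ∈ Set.Ico (M * -j) 0 ↔ p ∈ Set.Ioc 0 j := by
  constructor <;> rintro ⟨h₁, h₂⟩ <;> constructor <;> by_contra! h <;> nlinarith

def reindexEquiv (M : ℕ) [NeZero M] : Fin M × ℤ × ℤ ≃ ℤ × ℤ :=
  (Equiv.prodComm _ _).trans <| (Equiv.prodAssoc _ _ _).trans <|
    (Equiv.neg ℤ).prodCongr <| ((Equiv.neg ℤ).prodCongr (Equiv.refl _)).trans (Int.divModEquiv M).symm

lemma reindexEquiv_apply (M : ℕ) [NeZero M] (r : Fin M) (j p : ℤ) :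
    reindexEquiv M (r, j, p) = (-j, r - p * M) := by
  simp only [reindexEquiv, Equiv.trans_apply, Equiv.prodComm_apply, Prod.swap_prod_mk,
    Equiv.prodAssoc_apply, Equiv.prodCongr_apply, Equiv.neg_apply, Equiv.coe_trans, Equiv.coe_refl,
    Prod.map_apply, Function.comp_apply, id_eq, Int.divModEquiv_symm_apply, neg_mul, Prod.mk.injEq,
    true_and]
  ring

lemma cone_summand_reindex {M : ℕ} (a : ℤ → ℤ → ℂ) {θ : ℤ → ℂ} {ε c : ℂ} {r : ℤ} (hr₀ : 0 ≤ r)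
    (hr : r < M) (hθ : ∀ p : ℤ, θ (r - p * M) = ε ^ p * c) (j p : ℤ) :
    (if 0 ≤ r - p * M ∧ r - p * M < M * -j then a (-j) (r - p * M) * θ (r - p * M) else 0) -
        (if M * -j ≤ r - p * M ∧ r - p * M < 0 then a (-j) (r - p * M) * θ (r - p * M) else 0) =
      -(((if 0 < p ∧ p ≤ j then ε ^ p * a (-j) (r - p * M) else 0) -
          (if j < p ∧ p ≤ 0 then ε ^ p * a (-j) (r - p * M) else 0)) * c) := by
  simp only [← Set.mem_Ico, ← Set.mem_Ioc, sub_mul_mem_Ico_zero_iff hr₀ hr,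
    sub_mul_mem_Ico_neg_iff hr₀ hr, hθ]
  split_ifs <;> ring

theorem stmt_6_general (M : ℕ) (hM : 0 < M) (m : ℂ) (hm : m = (M : ℂ) / 2)
    (s : ℂ) (τ : ℂ) (hτ : 0 < τ.im) (z₁ z₂ z : ℂ)
    (ε : ℂ) (hε : ε = 1 ∨ ε = -1) :
    (∑' jk : ℤ × ℤ,
        ((if 0 ≤ jk.2 ∧ jk.2 < (M : ℤ) * jk.1 then
            fcoef m s τ z₁ z₂ jk.1 jk.2 * jtheta ε (jk.2 : ℂ) m τ z else 0) -
          (if (M : ℤ) * jk.1 ≤ jk.2 ∧ jk.2 < 0 then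
            fcoef m s τ z₁ z₂ jk.1 jk.2 * jtheta ε (jk.2 : ℂ) m τ z else 0))) =
      -∑ r ∈ Finset.range M,
        (indefSum fun j p => ε ^ p * fcoef m s τ z₁ z₂ (-j) ((r : ℤ) - p * (M : ℤ))) *
          jtheta ε (r : ℂ) m τ z := by
  subst hm
  have : NeZero M := ⟨hM.ne'⟩
  have hε₁ : ‖ε‖ = 1 := by rcases hε with rfl | rfl <;> simp
  have hε₀ : ε ≠ 0 := by rintro rfl; simp at hε₁
  have hsum :=
    (summable_ite_fcoef_mul_jtheta s hτ z₁ z₂ z hε₁ (P := fun jk => 0 ≤ jk.2 ∧ jk.2 < M * jk.1)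
      fun _ h => abs_le_mul_abs_of_cone M (.inl h)).sub
    (summable_ite_fcoef_mul_jtheta s hτ z₁ z₂ z hε₁ (P := fun jk => M * jk.1 ≤ jk.2 ∧ jk.2 < 0)
      fun _ h => abs_le_mul_abs_of_cone M (.inr h))
  rw [← (reindexEquiv M).tsum_eq]
  refine (Summable.tsum_prod (hsum.comp_injective (reindexEquiv M).injective)).trans ?_
  rw [tsum_fintype, Finset.sum_range, ← Finset.sum_neg_distrib]
  refine Finset.sum_congr rfl fun r _ => ?_
  rw [indefSum, ← tsum_mul_right, ← tsum_neg]
  refine tsum_congr fun ⟨j, p⟩ => ?_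
  rw [Function.comp_apply, reindexEquiv_apply]
  refine cone_summand_reindex _ (θ := fun k : ℤ => jtheta ε k ((M : ℂ) / 2) τ z)
    r.val.cast_nonneg (by exact_mod_cast r.isLt) (fun p => ?_) j p
  rw [← Int.cast_natCast (R := ℂ)]
  exact jtheta_intCast_sub_mul M hε₀ r p τ z

theorem stmt_6 (M : ℕ) (hM : 0 < M) (m : ℂ) (hm : m = (M : ℂ) / 2)
    (S : ℤ) (s : ℂ) (hs : s = (S : ℂ) + 1 / 2)
    (τ : ℂ) (hτ : 0 < τ.im) (z₁ z₂ z : ℂ)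
    (ε : ℂ) (hε : ε = 1 ∨ ε = -1) :
    (∑' jk : ℤ × ℤ,
        ((if 0 ≤ jk.2 ∧ jk.2 < (M : ℤ) * jk.1 then
            fcoef m s τ z₁ z₂ jk.1 jk.2 * jtheta ε (jk.2 : ℂ) m τ z else 0) -
          (if (M : ℤ) * jk.1 ≤ jk.2 ∧ jk.2 < 0 then
            fcoef m s τ z₁ z₂ jk.1 jk.2 * jtheta ε (jk.2 : ℂ) m τ z else 0))) =
      -∑ r ∈ Finset.range M,
        (indefSum fun j p => ε ^ p * fcoef m s τ z₁ z₂ (-j) ((r : ℤ) - p * (M : ℤ))) *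
          jtheta ε (r : ℂ) m τ z :=
  stmt_6_general M hM m hm s τ hτ z₁ z₂ z ε hε
end
end

section
/- Let m be a positive integer and let n, ν be integers with 0 ≤ n < 2m and 0 ≤ ν ≤ 2m. Let τ lie in the upper half-plane and z ∈ ℂ with m·z ∉ ℤ + ℤτ. Then G^{[m]}_{n,ν}(τ + 1, z) = e^{πi(ν+1/2)²/(2m+1)} G^{[m]}_{n,ν}(τ, z). -/
noncomputable section

open Complex

/-!
Every constituent of `G` is a `q`-series, and `τ ↦ τ + 1` multiplies the term `q^x` by `e2 x`.
Completing the square, `μ (x + a/(2μ))² = μ x² + x a + a²/(4μ)`, and in all the series at hand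
`μ x² + x a` is an integer (for `μ = m + 1/2`, `a = ν + 1/2` because `j (j + 1)` is even), so each
theta-type series picks up the constant phase `e2 (a²/(4μ))`. The phase `e2 (n²/(4m))` of
`θ_{n,m}` cancels against that of `g`, the exponents in `h` and in `q^{-mν²}` are integers, and
what remains is the phase `e2 ((ν + 1/2)²/(4(m + 1/2)))` of `θ^{(−)}_{ν+1/2,m+1/2}` and of `g`.
-/

lemma e2_add (a b : ℂ) : e2 (a + b) = e2 a * e2 b := by
  simp only [e2, mul_add, Complex.exp_add]

lemma e2_intCast (k : ℤ) : e2 k = 1 := by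
  rw [e2, mul_comm]
  exact Complex.exp_int_mul_two_pi_mul_I k

lemma e2_sub (a b : ℂ) : e2 (a - b) = e2 a / e2 b := by
  simp only [e2, mul_sub, Complex.exp_sub]

lemma e2_mul_add_one (y τ : ℂ) : e2 (y * (τ + 1)) = e2 y * e2 (y * τ) := by
  rw [mul_add_one, add_comm, e2_add]

lemma e2_mul_add_one_add (y τ w : ℂ) : e2 (y * (τ + 1) + w) = e2 y * e2 (y * τ + w) := by
  rw [e2_add, e2_mul_add_one, e2_add, mul_assoc]

lemma e2_mul_add_one_of_intCast {y : ℂ} (hy : ∃ k : ℤ, y = k) (τ : ℂ) :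
    e2 (y * (τ + 1)) = e2 (y * τ) := by
  obtain ⟨k, rfl⟩ := hy
  rw [e2_mul_add_one, e2_intCast, one_mul]

lemma e2_add_mul_add_one_of_intCast (w : ℂ) {y : ℂ} (hy : ∃ k : ℤ, y = k) (τ : ℂ) :
    e2 (w + y * (τ + 1)) = e2 (w + y * τ) := by
  rw [e2_add, e2_mul_add_one_of_intCast hy, e2_add]

lemma mul_add_div_two_mul_sq {μ : ℂ} (hμ : μ ≠ 0) (x a : ℂ) :
    μ * (x + a / (2 * μ)) ^ 2 = μ * x ^ 2 + x * a + a ^ 2 / (4 * μ) := by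
  field_simp
  ring

lemma e2_mul_add_div_two_mul_sq {μ x a : ℂ} (hμ : μ ≠ 0) (hint : ∃ k : ℤ, μ * x ^ 2 + x * a = k) :
    e2 (μ * (x + a / (2 * μ)) ^ 2) = e2 (a ^ 2 / (4 * μ)) := by
  obtain ⟨k, hk⟩ := hint
  rw [mul_add_div_two_mul_sq hμ, hk, e2_add, e2_intCast, one_mul]

lemma exists_intCast_eq_natCast_add_half_mul_sq_add (m : ℕ) (j b : ℤ) :
    ∃ k : ℤ, ((m : ℂ) + 1 / 2) * (j : ℂ) ^ 2 + j * (b + 1 / 2) = k := by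
  obtain ⟨r, hr⟩ := Int.even_mul_succ_self j
  refine ⟨m * j ^ 2 + j * b + r, ?_⟩
  have hr' : (j : ℂ) * (j + 1) = 2 * r := by exact_mod_cast hr.trans (two_mul r).symm
  push_cast
  linear_combination hr' / 2

lemma natCast_add_half_ne_zero (m : ℕ) : (m : ℂ) + 1 / 2 ≠ 0 := by
  have : ((2 * m + 1 : ℕ) : ℂ) ≠ 0 := Nat.cast_ne_zero.mpr (by omega)
  contrapose! this
  push_cast
  linear_combination 2 * this

lemma jtheta_add_one (ε a μ τ z : ℂ) (hμ : μ ≠ 0)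
    (hint : ∀ j : ℤ, ∃ k : ℤ, μ * (j : ℂ) ^ 2 + j * a = k) :
    jtheta ε a μ (τ + 1) z = e2 (a ^ 2 / (4 * μ)) * jtheta ε a μ τ z := by
  rw [jtheta, jtheta, ← tsum_mul_left]
  refine tsum_congr fun j => ?_
  rw [e2_mul_add_one_add, e2_mul_add_div_two_mul_sq hμ (hint j)]
  ring

lemma indefSum_mul_left (c : ℂ) (f : ℤ → ℤ → ℂ) :
    indefSum (fun j p => c * f j p) = c * indefSum f := by
  rw [indefSum, indefSum, ← tsum_mul_left]
  refine tsum_congr fun jp => ?_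
  split_ifs <;> ring

lemma gfun_add_one (m : ℕ) (hm : m ≠ 0) (n ν : ℤ) (τ : ℂ) :
    gfun m n ν (τ + 1) =
      e2 (((ν : ℂ) + 1 / 2) ^ 2 / (4 * ((m : ℂ) + 1 / 2))) / e2 ((n : ℂ) ^ 2 / (4 * m)) *
        gfun m n ν τ := by
  have hm' : (m : ℂ) ≠ 0 := Nat.cast_ne_zero.mpr hm
  have hμ := natCast_add_half_ne_zero m
  rw [gfun, gfun, ← indefSum_mul_left]
  congr 1
  funext j p
  have hx : (j : ℂ) + ν - (ν + 1 / 2) / (2 * m + 1) =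
      ((j + ν : ℤ) : ℂ) + -((ν : ℂ) + 1 / 2) / (2 * ((m : ℂ) + 1 / 2)) := by
    push_cast
    ring
  have hy : (p : ℂ) + ν - n / (2 * m) = ((p + ν : ℤ) : ℂ) + -(n : ℂ) / (2 * m) := by
    push_cast
    ring
  obtain ⟨k, hk⟩ := exists_intCast_eq_natCast_add_half_mul_sq_add m (j + ν) (-ν - 1)
  have hθ : e2 (((m : ℂ) + 1 / 2) * ((j + ν : ℤ) + -((ν : ℂ) + 1 / 2) / (2 * (m + 1 / 2))) ^ 2) =
      e2 (((ν : ℂ) + 1 / 2) ^ 2 / (4 * ((m : ℂ) + 1 / 2))) := by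
    rw [e2_mul_add_div_two_mul_sq hμ ⟨k, by rw [← hk]; push_cast; ring⟩, neg_sq]
  have hφ : e2 ((m : ℂ) * ((p + ν : ℤ) + -(n : ℂ) / (2 * m)) ^ 2) = e2 ((n : ℂ) ^ 2 / (4 * m)) := by
    rw [e2_mul_add_div_two_mul_sq hm' ⟨m * (p + ν) ^ 2 - (p + ν) * n, by push_cast; ring⟩, neg_sq]
  rw [hx, hy, e2_mul_add_one, e2_sub, hθ, hφ]
  ring

lemma hfun_add_one (m : ℕ) (n ν : ℤ) (τ z : ℂ) : hfun m n ν (τ + 1) z = hfun m n ν τ z := by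
  refine tsum_congr fun j => ?_
  rw [e2_add_mul_add_one_of_intCast _ ⟨m * j ^ 2 + n * (j + ν), by push_cast; ring⟩,
    e2_add_mul_add_one_of_intCast _ ⟨2 * m * (j + ν), by push_cast; ring⟩]

theorem stmt_12_general (m : ℕ) (hm : 0 < m)
    (n ν : ℤ)
    (τ : ℂ) (z : ℂ) :
    Gfun (m : ℂ) n ν (τ + 1) z =
      e2 (((ν : ℂ) + 1 / 2) ^ 2 / (2 * (2 * (m : ℂ) + 1))) * Gfun (m : ℂ) n ν τ z := by
  have hθ := jtheta_add_one 1 n m τ z (Nat.cast_ne_zero.mpr hm.ne')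
    fun j => ⟨m * j ^ 2 + j * n, by push_cast; ring⟩
  have hθ' := jtheta_add_one (-1) (ν + 1 / 2) (m + 1 / 2) τ 0 (natCast_add_half_ne_zero m)
    (exists_intCast_eq_natCast_add_half_mul_sq_add m · ν)
  have hq : e2 (-((m : ℂ) * ν ^ 2) * (τ + 1)) = e2 (-((m : ℂ) * ν ^ 2) * τ) :=
    e2_mul_add_one_of_intCast ⟨-(m * ν ^ 2), by push_cast; ring⟩ τ
  have hphase : ((ν : ℂ) + 1 / 2) ^ 2 / (4 * ((m : ℂ) + 1 / 2)) =
      ((ν : ℂ) + 1 / 2) ^ 2 / (2 * (2 * (m : ℂ) + 1)) := by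
    ring
  have hcancel : e2 (((ν : ℂ) + 1 / 2) ^ 2 / (2 * (2 * (m : ℂ) + 1))) / e2 ((n : ℂ) ^ 2 / (4 * m)) *
      e2 ((n : ℂ) ^ 2 / (4 * m)) = e2 (((ν : ℂ) + 1 / 2) ^ 2 / (2 * (2 * (m : ℂ) + 1))) :=
    div_mul_cancel₀ _ (Complex.exp_ne_zero _)
  rw [Gfun, Gfun, gfun_add_one m hm.ne', hθ, hθ', hq, hfun_add_one, hphase]
  linear_combination gfun m n ν τ * jtheta 1 n m τ z * hcancel

theorem stmt_12 (m : ℕ) (hm : 0 < m)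
    (n ν : ℤ) (hn : 0 ≤ n ∧ n < 2 * (m : ℤ)) (hν : 0 ≤ ν ∧ ν ≤ 2 * (m : ℤ))
    (τ : ℂ) (hτ : 0 < τ.im) (z : ℂ)
    (hz : ∀ a b : ℤ, (m : ℂ) * z ≠ (a : ℂ) + (b : ℂ) * τ) :
    Gfun (m : ℂ) n ν (τ + 1) z =
      e2 (((ν : ℂ) + 1 / 2) ^ 2 / (2 * (2 * (m : ℂ) + 1))) * Gfun (m : ℂ) n ν τ z :=
  stmt_12_general m hm n ν τ z
end
end
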